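/- Let a, b > 0, ν ∈ [0,1], n ≥ 1 a natural number, h = b/a, and K(t) = (1+t)²/(4t). Define r₀ = min{ν, 1-ν}, r_{k} = min{2 r_{k-1}, 1 − 2 r_{k-1}} for k ≥ 1, R_n = 1 − r_n, and m_k = ⌊2^k ν⌋. Then K(h^(1/2ⁿ))^{r_n} · a^(1-ν) b^ν ≤ (1-ν)a + νb − Σ_{k=0}^{n-1} r_k · [ (a^{1 − m_k/2^k} b^{m_k/2^k})^{1/2} − (a^{1 − (m_k+1)/2^k} b^{(m_k+1)/2^k})^{1/2} ]² ≤ K(h^(1/2ⁿ))^{R_n} · a^(1-ν) b^ν. -/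

import Mathlib

/-!
Write `2^k ν = m_k + s_k` with `s_k = fract (2^k ν)`; then `r_k = min s_k (1 - s_k)`, and
`m_{k+1}` is `2 m_k` or `2 m_k + 1` according as `s_k < 1/2` or not. With
`A_k = a^(1 - m_k/2^k) b^(m_k/2^k)` and `B_k` the next dyadic node, halving the grid inserts the node
`√(A_k B_k)`, and this gives
`(1 - s_{k+1}) A_{k+1} + s_{k+1} B_{k+1} = (1 - s_k) A_k + s_k B_k - r_k (√A_k - √B_k)^2`.
Telescoping, the middle term of the claim is `(1 - s_n) A_n + s_n B_n`. Since `B_n = A_n t` and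
`a^(1-ν) b^ν = A_n t^(s_n)` for `t = h^(1/2^n)`, the claim reduces to the scalar bounds
`K(t)^min(s, 1-s) t^s ≤ 1 - s + s t ≤ K(t)^(1 - min(s, 1-s)) t^s`: for `s ≤ 1/2` they are weighted
AM-GM inequalities, and the case `s > 1/2` follows by `t ↦ 1/t`, as `K(1/t) = K(t)`.
-/

open Real Finset

noncomputable def Kc (t : ℝ) : ℝ := (1 + t)^2 / (4 * t)

noncomputable def rseq (ν : ℝ) : ℕ → ℝ
  | 0 => min ν (1 - ν)
  | k + 1 => min (2 * rseq ν k) (1 - 2 * rseq ν k)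

noncomputable def mfl (ν : ℝ) (k : ℕ) : ℝ := ⌊(2:ℝ)^k * ν⌋

section Kantorovich

variable {t : ℝ}

lemma Kc_inv (ht : 0 < t) : Kc t⁻¹ = Kc t := by
  unfold Kc
  field_simp
  ring

lemma Kc_rpow_mul_rpow (ht : 0 < t) (r μ : ℝ) :
    Kc t ^ r * t ^ μ = ((1 + t) / 2) ^ (2 * r) * t ^ (μ - r) := by
  have hK : Kc t = ((1 + t) / 2) ^ (2:ℝ) * t ^ (-1:ℝ) := by
    rw [rpow_two, rpow_neg_one, Kc]
    ring
  rw [hK, mul_rpow (by positivity) (by positivity), ← rpow_mul (by positivity),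
    ← rpow_mul ht.le, mul_assoc, ← rpow_add ht]
  ring_nf

variable {μ : ℝ}

lemma Kc_rpow_mul_rpow_le_of_le_half (ht : 0 < t) (hμ0 : 0 ≤ μ) (hμ : μ ≤ 1 / 2) :
    Kc t ^ μ * t ^ μ ≤ 1 - μ + μ * t := by
  have amgm := geom_mean_le_arith_mean2_weighted (by linarith) (by linarith)
    (by positivity) zero_le_one (add_sub_cancel (2 * μ) 1) (p₁ := (1 + t) / 2)
  rw [one_rpow, mul_one] at amgm
  rw [Kc_rpow_mul_rpow ht, sub_self, rpow_zero, mul_one]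
  linarith

lemma le_Kc_rpow_mul_rpow_of_le_half (ht : 0 < t) (hμ0 : 0 ≤ μ) (hμ : μ ≤ 1 / 2) :
    1 - μ + μ * t ≤ Kc t ^ (1 - μ) * t ^ μ := by
  set p := 1 - μ + μ * t
  have hp : 0 < p := by nlinarith
  have hd : 0 < 2 * (1 - μ) := by linarith
  -- weighted AM-GM for `p` and `t` with weights `1 : 1 - 2μ`, raised to the power `2 - 2μ`
  have amgm : p ^ (1 / (2 * (1 - μ))) * t ^ (1 - 1 / (2 * (1 - μ))) ≤ (1 + t) / 2 := by
    have := geom_mean_le_arith_mean2_weighted (w₁ := 1 / (2 * (1 - μ))) (p₁ := p) (p₂ := t)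
      (by positivity) (sub_nonneg.mpr ((div_le_one hd).mpr (by linarith))) hp.le ht.le
      (add_sub_cancel _ 1)
    convert this using 1
    have : 1 - μ ≠ 0 := by linarith
    simp only [p]
    field_simp
    ring
  have hpow := rpow_le_rpow (by positivity) amgm hd.le
  rw [mul_rpow (by positivity) (by positivity), ← rpow_mul hp.le, ← rpow_mul ht.le,
    one_div_mul_cancel hd.ne', rpow_one] at hpow
  calc p = p * t ^ ((1 - 1 / (2 * (1 - μ))) * (2 * (1 - μ))) * t ^ (μ - (1 - μ)) := by
        rw [mul_assoc, ← rpow_add ht, sub_mul, one_div_mul_cancel hd.ne']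
        ring_nf
        rw [rpow_zero, mul_one]
    _ ≤ ((1 + t) / 2) ^ (2 * (1 - μ)) * t ^ (μ - (1 - μ)) := by gcongr
    _ = Kc t ^ (1 - μ) * t ^ μ := (Kc_rpow_mul_rpow ht _ _).symm

lemma Kc_inv_rpow_mul_inv_rpow_mul (ht : 0 < t) (r μ : ℝ) :
    Kc t⁻¹ ^ r * t⁻¹ ^ (1 - μ) * t = Kc t ^ r * t ^ μ := by
  rw [Kc_inv ht, inv_rpow ht.le, ← rpow_neg ht.le, mul_assoc, ← rpow_add_one ht.ne']
  ring_nf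

lemma one_sub_add_mul_inv_mul (ht : 0 < t) (μ : ℝ) :
    (1 - (1 - μ) + (1 - μ) * t⁻¹) * t = 1 - μ + μ * t := by
  field_simp
  ring

lemma Kc_rpow_min_mul_rpow_le (ht : 0 < t) (hμ : μ ∈ Set.Icc (0:ℝ) 1) :
    Kc t ^ min μ (1 - μ) * t ^ μ ≤ 1 - μ + μ * t := by
  rcases le_or_gt μ (1 / 2) with hμ2 | hμ2
  · rw [min_eq_left (by linarith)]
    exact Kc_rpow_mul_rpow_le_of_le_half ht hμ.1 hμ2
  · rw [min_eq_right (by linarith), ← Kc_inv_rpow_mul_inv_rpow_mul ht,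
      ← one_sub_add_mul_inv_mul ht]
    gcongr
    exact Kc_rpow_mul_rpow_le_of_le_half (inv_pos.mpr ht) (by linarith [hμ.2]) (by linarith)

lemma le_Kc_rpow_one_sub_min_mul_rpow (ht : 0 < t) (hμ : μ ∈ Set.Icc (0:ℝ) 1) :
    1 - μ + μ * t ≤ Kc t ^ (1 - min μ (1 - μ)) * t ^ μ := by
  rcases le_or_gt μ (1 / 2) with hμ2 | hμ2
  · rw [min_eq_left (by linarith)]
    exact le_Kc_rpow_mul_rpow_of_le_half ht hμ.1 hμ2
  · rw [min_eq_right (by linarith), ← Kc_inv_rpow_mul_inv_rpow_mul ht,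
      ← one_sub_add_mul_inv_mul ht]
    gcongr
    exact le_Kc_rpow_mul_rpow_of_le_half (inv_pos.mpr ht) (by linarith [hμ.2]) (by linarith)

end Kantorovich

namespace Int

variable {x : ℝ}

lemma floor_two_mul_of_fract_lt_half (hx : fract x < 1 / 2) : ⌊2 * x⌋ = 2 * ⌊x⌋ := by
  rw [floor_eq_iff]
  push_cast
  constructor <;> linarith [floor_add_fract x, fract_nonneg x]

lemma floor_two_mul_of_half_le_fract (hx : 1 / 2 ≤ fract x) : ⌊2 * x⌋ = 2 * ⌊x⌋ + 1 := by
  rw [floor_eq_iff]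
  push_cast
  constructor <;> linarith [floor_add_fract x, fract_lt_one x]

lemma fract_two_mul_of_fract_lt_half (hx : fract x < 1 / 2) : fract (2 * x) = 2 * fract x := by
  rw [← self_sub_floor, floor_two_mul_of_fract_lt_half hx, ← self_sub_floor]
  push_cast
  ring

lemma fract_two_mul_of_half_le_fract (hx : 1 / 2 ≤ fract x) :
    fract (2 * x) = 2 * fract x - 1 := by
  rw [← self_sub_floor, floor_two_mul_of_half_le_fract hx, ← self_sub_floor]
  push_cast
  ring

end Int

open Int in
lemma min_fract_two_mul (x : ℝ) :
    min (fract (2 * x)) (1 - fract (2 * x)) =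
      min (2 * min (fract x) (1 - fract x)) (1 - 2 * min (fract x) (1 - fract x)) := by
  rcases lt_or_ge (fract x) (1 / 2) with hx | hx
  · rw [fract_two_mul_of_fract_lt_half hx, min_eq_left (a := fract x) (by linarith)]
  · rw [fract_two_mul_of_half_le_fract hx, min_eq_right (a := fract x) (by linarith), min_comm]
    ring_nf

lemma rseq_eq_min_fract {ν : ℝ} (hν : ν ∈ Set.Icc (0:ℝ) 1) (k : ℕ) :
    rseq ν k = min (Int.fract (2 ^ k * ν)) (1 - Int.fract (2 ^ k * ν)) := by
  induction k with
  | zero =>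
    rw [pow_zero, one_mul, rseq]
    rcases hν.2.lt_or_eq with hν1 | rfl
    · rw [Int.fract_eq_self.mpr ⟨hν.1, hν1⟩]
    · norm_num
  | succ k ih => rw [rseq, ih, pow_succ', mul_assoc, min_fract_two_mul]

noncomputable def floorLerp (f : ℝ → ℝ) (x : ℝ) : ℝ :=
  (1 - Int.fract x) * f ⌊x⌋ + Int.fract x * f (⌊x⌋ + 1)

lemma floorLerp_of_mem_Icc (f : ℝ → ℝ) {x : ℝ} (hx : x ∈ Set.Icc (0:ℝ) 1) :
    floorLerp f x = (1 - x) * f 0 + x * f 1 := by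
  rcases hx.2.lt_or_eq with hx1 | rfl
  · rw [floorLerp, Int.fract_eq_self.mpr ⟨hx.1, hx1⟩, Int.floor_eq_zero_iff.mpr ⟨hx.1, hx1⟩]
    norm_num
  · simp [floorLerp]

lemma floorLerp_two_mul {f g : ℝ → ℝ} (hfg : ∀ y, g (2 * y) = f y) (x : ℝ) :
    floorLerp g (2 * x) = floorLerp f x - min (Int.fract x) (1 - Int.fract x) *
      (f ⌊x⌋ + f (⌊x⌋ + 1) - 2 * g (2 * ⌊x⌋ + 1)) := by
  have hnext : g (2 * ⌊x⌋ + 1 + 1) = f (⌊x⌋ + 1) := by rw [← hfg]; ring_nf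
  rcases lt_or_ge (Int.fract x) (1 / 2) with hx | hx
  · rw [floorLerp, floorLerp, Int.fract_two_mul_of_fract_lt_half hx,
      Int.floor_two_mul_of_fract_lt_half hx, min_eq_left (by linarith)]
    push_cast
    rw [hfg]
    ring
  · rw [floorLerp, floorLerp, Int.fract_two_mul_of_half_le_fract hx,
      Int.floor_two_mul_of_half_le_fract hx, min_eq_right (by linarith)]
    push_cast
    rw [hnext]
    ring

noncomputable def weightedGM (a b p : ℝ) : ℝ := a ^ (1 - p) * b ^ p

lemma weightedGM_zero (a b : ℝ) : weightedGM a b 0 = a := by simp [weightedGM]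

lemma weightedGM_one (a b : ℝ) : weightedGM a b 1 = b := by simp [weightedGM]

section weightedGM

variable {a b : ℝ} (ha : 0 < a) (hb : 0 < b)
include ha hb

lemma weightedGM_pos (p : ℝ) : 0 < weightedGM a b p := by
  unfold weightedGM; positivity

lemma weightedGM_add (p e : ℝ) : weightedGM a b (p + e) = weightedGM a b p * (b / a) ^ e := by
  rw [weightedGM, weightedGM, div_rpow hb.le ha.le, show 1 - (p + e) = 1 - p - e by ring,
    rpow_sub ha, rpow_add hb]
  field_simp

lemma weightedGM_mul_weightedGM (p q : ℝ) :
    weightedGM a b p * weightedGM a b q = a ^ (2 - (p + q)) * b ^ (p + q) := by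
  rw [weightedGM, weightedGM, mul_mul_mul_comm, ← rpow_add ha, ← rpow_add hb]
  ring_nf

lemma sqrt_weightedGM_mul_sqrt_weightedGM (p q : ℝ) :
    √(weightedGM a b p) * √(weightedGM a b q) = weightedGM a b ((p + q) / 2) := by
  have hsq : weightedGM a b p * weightedGM a b q =
      weightedGM a b ((p + q) / 2) * weightedGM a b ((p + q) / 2) := by
    rw [weightedGM_mul_weightedGM ha hb, weightedGM_mul_weightedGM ha hb, add_halves]
  rw [← sqrt_mul (weightedGM_pos ha hb p).le, hsq, sqrt_mul_self (weightedGM_pos ha hb _).le]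

lemma floorLerp_weightedGM_div (N x : ℝ) :
    floorLerp (fun y => weightedGM a b (y / N)) x =
      weightedGM a b (⌊x⌋ / N) * (1 - Int.fract x + Int.fract x * (b / a) ^ (1 / N)) := by
  rw [floorLerp, add_div, weightedGM_add ha hb]
  ring

lemma weightedGM_div_eq_floor (N x : ℝ) :
    weightedGM a b (x / N) = weightedGM a b (⌊x⌋ / N) * ((b / a) ^ (1 / N)) ^ Int.fract x := by
  rw [← rpow_mul (div_pos hb ha).le, ← weightedGM_add ha hb, one_div_mul_eq_div, ← add_div,
    Int.floor_add_fract]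

end weightedGM

lemma sub_sq_sqrt_eq {A B : ℝ} (hA : 0 ≤ A) (hB : 0 ≤ B) :
    (√A - √B) ^ 2 = A + B - 2 * (√A * √B) := by
  rw [sub_sq, sq_sqrt hA, sq_sqrt hB]; ring

lemma sub_sum_eq_floorLerp_weightedGM {a b ν : ℝ} (ha : 0 < a) (hb : 0 < b)
    (hν : ν ∈ Set.Icc (0:ℝ) 1) (n : ℕ) :
    (1 - ν) * a + ν * b - ∑ k ∈ range n, rseq ν k *
        (√(weightedGM a b (mfl ν k / 2 ^ k)) - √(weightedGM a b ((mfl ν k + 1) / 2 ^ k))) ^ 2 =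
      floorLerp (fun y => weightedGM a b (y / 2 ^ n)) (2 ^ n * ν) := by
  induction n with
  | zero =>
    rw [range_zero, sum_empty, sub_zero, pow_zero, one_mul, floorLerp_of_mem_Icc _ hν]
    simp only [div_one, weightedGM_zero, weightedGM_one]
  | succ n ih =>
    have hhalve : ∀ y, weightedGM a b (2 * y / 2 ^ (n + 1)) = weightedGM a b (y / 2 ^ n) := by
      intro y
      rw [pow_succ', mul_div_mul_left _ _ two_ne_zero]
    have hmid : √(weightedGM a b (mfl ν n / 2 ^ n)) * √(weightedGM a b ((mfl ν n + 1) / 2 ^ n)) =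
        weightedGM a b ((2 * mfl ν n + 1) / 2 ^ (n + 1)) := by
      rw [sqrt_weightedGM_mul_sqrt_weightedGM ha hb, pow_succ]
      ring_nf
    rw [sum_range_succ, ← sub_sub, ih, show (2:ℝ) ^ (n + 1) * ν = 2 * (2 ^ n * ν) by ring,
      floorLerp_two_mul hhalve, rseq_eq_min_fract hν,
      sub_sq_sqrt_eq (weightedGM_pos ha hb _).le (weightedGM_pos ha hb _).le, hmid, mfl]

theorem stmt7_general (a b ν : ℝ) (ha : 0 < a) (hb : 0 < b) (hν : ν ∈ Set.Icc (0:ℝ) 1)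
    (n : ℕ) (h : ℝ) (hh : h = b / a) :
    Kc (h ^ ((1:ℝ)/2^n)) ^ rseq ν n * (a ^ (1 - ν) * b ^ ν) ≤
      (1 - ν) * a + ν * b - (∑ k ∈ Finset.range n, rseq ν k * (Real.sqrt (a ^ (1 - mfl ν k / 2^k) * b ^ (mfl ν k / 2^k)) - Real.sqrt (a ^ (1 - (mfl ν k + 1) / 2^k) * b ^ ((mfl ν k + 1) / 2^k)))^2) ∧
    (1 - ν) * a + ν * b - (∑ k ∈ Finset.range n, rseq ν k * (Real.sqrt (a ^ (1 - mfl ν k / 2^k) * b ^ (mfl ν k / 2^k)) - Real.sqrt (a ^ (1 - (mfl ν k + 1) / 2^k) * b ^ ((mfl ν k + 1) / 2^k)))^2) ≤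
      Kc (h ^ ((1:ℝ)/2^n)) ^ (1 - rseq ν n) * (a ^ (1 - ν) * b ^ ν) := by
  subst hh
  set t := (b / a) ^ ((1:ℝ) / 2 ^ n)
  set x := (2:ℝ) ^ n * ν
  have ht : 0 < t := by positivity
  have hG := weightedGM_pos ha hb (⌊x⌋ / 2 ^ n)
  have hs : Int.fract x ∈ Set.Icc (0:ℝ) 1 := ⟨Int.fract_nonneg x, (Int.fract_lt_one x).le⟩
  have hmean : weightedGM a b ν = weightedGM a b (⌊x⌋ / 2 ^ n) * t ^ Int.fract x := by
    rw [← weightedGM_div_eq_floor ha hb, mul_div_cancel_left₀ ν (by positivity)]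
  simp only [← weightedGM.eq_1]
  rw [sub_sum_eq_floorLerp_weightedGM ha hb hν n, floorLerp_weightedGM_div ha hb, hmean,
    rseq_eq_min_fract hν]
  constructor
  · rw [mul_left_comm]
    exact mul_le_mul_of_nonneg_left (Kc_rpow_min_mul_rpow_le ht hs) hG.le
  · rw [mul_left_comm]
    exact mul_le_mul_of_nonneg_left (le_Kc_rpow_one_sub_min_mul_rpow ht hs) hG.le

theorem stmt7 (a b ν : ℝ) (ha : 0 < a) (hb : 0 < b) (hν : ν ∈ Set.Icc (0:ℝ) 1)
    (n : ℕ) (hn : 1 ≤ n) (h : ℝ) (hh : h = b / a) :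
    Kc (h ^ ((1:ℝ)/2^n)) ^ rseq ν n * (a ^ (1 - ν) * b ^ ν) ≤
      (1 - ν) * a + ν * b - (∑ k ∈ Finset.range n, rseq ν k * (Real.sqrt (a ^ (1 - mfl ν k / 2^k) * b ^ (mfl ν k / 2^k)) - Real.sqrt (a ^ (1 - (mfl ν k + 1) / 2^k) * b ^ ((mfl ν k + 1) / 2^k)))^2) ∧
    (1 - ν) * a + ν * b - (∑ k ∈ Finset.range n, rseq ν k * (Real.sqrt (a ^ (1 - mfl ν k / 2^k) * b ^ (mfl ν k / 2^k)) - Real.sqrt (a ^ (1 - (mfl ν k + 1) / 2^k) * b ^ ((mfl ν k + 1) / 2^k)))^2) ≤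
      Kc (h ^ ((1:ℝ)/2^n)) ^ (1 - rseq ν n) * (a ^ (1 - ν) * b ^ ν) :=
  stmt7_general a b ν ha hb hν n h hh
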